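/- arXiv:2210.08576 — 7 statements merged into one kernel-verified Lean document; each statement's English description precedes it below -/
import Mathlib

section
/- For any permutation σ of {1,…,m}, any y ∈ {0,1}^m, and its reversal σ̄, the difference ℓ_R(σ,y) − ℓ_R(σ̄,y) equals Σ_{i=1}^m (2σ⁻¹(i) − (m+1))·y_i. -/
open Finset

def rankLoss {m : ℕ} (σ : Equiv.Perm (Fin m)) (y : Fin m → Bool) : ℕ :=
  ∑ p ∈ Finset.univ.filter (fun p : Fin m × Fin m => p.1 < p.2),
    if y (σ p.1) = false ∧ y (σ p.2) = true then 1 else 0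

/-- `ℓ_R(σ,y) − ℓ_R(σ̄,y) = Σ_i (2σ⁻¹(i) − (m+1))·y_i`, where the
reversal `σ̄` satisfies `σ̄⁻¹(i) = m + 1 − σ⁻¹(i)` in 1-based positions. -/
theorem stmt2 (m : ℕ) (hm : 1 ≤ m) (σ σbar : Equiv.Perm (Fin m))
    (hrev : ∀ i : Fin m, ((σbar.symm i : ℕ) + 1) + ((σ.symm i : ℕ) + 1) = m + 1)
    (y : Fin m → Bool) :
    (rankLoss σ y : ℤ) - (rankLoss σbar y : ℤ) =
      ∑ i : Fin m, (2 * ((σ.symm i : ℤ) + 1) - ((m : ℤ) + 1)) *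
        (if y i = true then 1 else 0) := by
  -- the reversal map on positions
  set rev : Fin m → Fin m := fun j => ⟨m - 1 - j, by omega⟩ with hrevdef
  have hrv : ∀ j : Fin m, (rev j : ℕ) = m - 1 - j := fun j => rfl
  have hrevinv : ∀ j, rev (rev j) = j := by
    intro j; ext; simp only [hrv]; omega
  have hbarσ : ∀ j : Fin m, σbar j = σ (rev j) := by
    intro j
    have h := hrev (σbar j)
    have h2 : σbar.symm (σbar j) = j := σbar.symm_apply_apply j
    rw [h2] at h
    have : σ.symm (σbar j) = rev j := by ext; simp only [hrv]; omega
    rw [← this, Equiv.apply_symm_apply]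
  set P := Finset.univ.filter (fun p : Fin m × Fin m => p.1 < p.2) with hP
  set f : Fin m → ℤ := fun k => if y (σ k) = true then 1 else 0 with hf
  -- rewrite rankLoss σbar via the pair reversal bijection
  have hbar : (rankLoss σbar y : ℤ) =
      ∑ p ∈ P, (if y (σ p.1) = true ∧ y (σ p.2) = false then (1:ℤ) else 0) := by
    rw [rankLoss, Nat.cast_sum]
    push_cast
    refine Finset.sum_bij' (fun p _ => (rev p.2, rev p.1)) (fun p _ => (rev p.2, rev p.1))
      ?_ ?_ ?_ ?_ ?_
    · intro p hp
      simp only [hP, Finset.mem_filter, Finset.mem_univ, true_and] at hp ⊢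
      simp only [Fin.lt_def, hrv] at hp ⊢
      omega
    · intro p hp
      simp only [hP, Finset.mem_filter, Finset.mem_univ, true_and] at hp ⊢
      simp only [Fin.lt_def, hrv] at hp ⊢
      omega
    · intro p hp; simp [hrevinv]
    · intro p hp; simp [hrevinv]
    · intro p hp
      simp only [hbarσ, hrevinv]
      exact if_congr and_comm rfl rfl
  have hplain : (rankLoss σ y : ℤ) =
      ∑ p ∈ P, (if y (σ p.1) = false ∧ y (σ p.2) = true then (1:ℤ) else 0) := by
    rw [rankLoss, Nat.cast_sum]; push_cast; rfl
  rw [hplain, hbar, ← Finset.sum_sub_distrib]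
  -- pointwise: difference of indicators = f p.2 - f p.1
  have hpt : ∀ p ∈ P,
      ((if y (σ p.1) = false ∧ y (σ p.2) = true then (1:ℤ) else 0) -
       (if y (σ p.1) = true ∧ y (σ p.2) = false then (1:ℤ) else 0)) = f p.2 - f p.1 := by
    intro p _
    rcases hy1 : y (σ p.1) <;> rcases hy2 : y (σ p.2) <;> simp [hf, hy1, hy2]
  rw [Finset.sum_congr rfl hpt]
  -- reindex the RHS
  have hRHS : ∑ i : Fin m, (2 * ((σ.symm i : ℤ) + 1) - ((m : ℤ) + 1)) *
        (if y i = true then 1 else 0)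
      = ∑ k : Fin m, (2 * ((k : ℤ) + 1) - ((m : ℤ) + 1)) * f k := by
    refine Fintype.sum_equiv σ.symm _ _ (fun i => ?_)
    simp [hf]
  rw [hRHS]
  -- expand the pair sum
  have hsplit : ∑ p ∈ P, (f p.2 - f p.1)
      = ∑ k : Fin m, ∑ l : Fin m, (if k < l then f l - f k else 0) := by
    rw [hP, Finset.sum_filter, Fintype.sum_prod_type]
  rw [hsplit]
  have hsub : ∀ k l : Fin m, (if k < l then f l - f k else 0)
      = (if k < l then f l else 0) - (if k < l then f k else 0) := by
    intro k l; split <;> simp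
  simp only [hsub]
  simp only [Finset.sum_sub_distrib]
  have h1 : ∑ k : Fin m, ∑ l : Fin m, (if k < l then f l else 0)
      = ∑ l : Fin m, (l : ℤ) * f l := by
    rw [Finset.sum_comm]
    refine Finset.sum_congr rfl (fun l _ => ?_)
    rw [← Finset.sum_filter, Finset.sum_const,
      show Finset.univ.filter (fun k : Fin m => k < l) = Finset.Iio l from by
        ext x; simp, Fin.card_Iio]
    simp [mul_comm]
  have h2 : ∑ k : Fin m, ∑ l : Fin m, (if k < l then f k else 0)
      = ∑ k : Fin m, ((m - 1 - (k:ℕ) : ℕ) : ℤ) * f k := by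
    refine Finset.sum_congr rfl (fun k _ => ?_)
    rw [← Finset.sum_filter, Finset.sum_const,
      show Finset.univ.filter (fun l : Fin m => k < l) = Finset.Ioi k from by
        ext x; simp, Fin.card_Ioi]
    simp [mul_comm]
  rw [h1, h2, ← Finset.sum_sub_distrib]
  refine Finset.sum_congr rfl (fun k _ => ?_)
  have hk : (k : ℕ) < m := k.isLt
  have : ((m - 1 - (k:ℕ) : ℕ) : ℤ) = (m : ℤ) - 1 - (k : ℕ) := by omega
  rw [this]; ring
end

section
/- For two permutations σ₁, σ₂ of {1,…,m} and any probability distribution P over {0,1}^m, E_P[ℓ_R(σ₂,·) − ℓ_R(σ₁,·)] = Σ_{(i,j) ∈ I} [P(Y_i=1) − P(Y_j=1)], where I = {(i,j) : σ₁ ranks label i above label j and σ₂ ranks label j above label i}. -/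
open Finset

/-- Marginal probability `P(Y_i = 1)`. -/
def marg {m : ℕ} (P : (Fin m → Bool) → ℝ) (i : Fin m) : ℝ :=
  ∑ y : Fin m → Bool, if y i = true then P y else 0

lemma rankLoss_eq {m : ℕ} (σ : Equiv.Perm (Fin m)) (y : Fin m → Bool) :
    (rankLoss σ y : ℝ) =
    ∑ p ∈ Finset.univ.filter (fun p : Fin m × Fin m => σ.symm p.1 < σ.symm p.2),
      (if y p.1 = false ∧ y p.2 = true then (1:ℝ) else 0) := by
  unfold rankLoss
  push_cast
  apply Finset.sum_equiv (Equiv.prodCongr σ σ) <;> intro p <;> simp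

lemma pointwise {m : ℕ} (σ₁ σ₂ : Equiv.Perm (Fin m)) (y : Fin m → Bool) :
    (rankLoss σ₂ y : ℝ) - (rankLoss σ₁ y : ℝ) =
    ∑ p ∈ Finset.univ.filter (fun p : Fin m × Fin m =>
        σ₁.symm p.1 < σ₁.symm p.2 ∧ σ₂.symm p.2 < σ₂.symm p.1),
      ((if y p.1 = true then (1:ℝ) else 0) - (if y p.2 = true then (1:ℝ) else 0)) := by
  rw [rankLoss_eq, rankLoss_eq]
  set f : Fin m × Fin m → ℝ := fun p => if y p.1 = false ∧ y p.2 = true then (1:ℝ) else 0 with hf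
  have key : ∀ τ₁ τ₂ : Equiv.Perm (Fin m),
      (Finset.univ.filter (fun p : Fin m × Fin m => τ₂.symm p.1 < τ₂.symm p.2)) =
      (Finset.univ.filter (fun p : Fin m × Fin m =>
        τ₁.symm p.1 < τ₁.symm p.2 ∧ τ₂.symm p.1 < τ₂.symm p.2)) ∪
      (Finset.univ.filter (fun p : Fin m × Fin m =>
        τ₂.symm p.1 < τ₂.symm p.2 ∧ τ₁.symm p.2 < τ₁.symm p.1)) := by
    intro τ₁ τ₂
    ext p
    simp only [mem_filter, mem_union, mem_univ, true_and]
    constructor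
    · intro h
      rcases lt_trichotomy (τ₁.symm p.1) (τ₁.symm p.2) with h1 | h1 | h1
      · exact Or.inl ⟨h1, h⟩
      · exfalso
        have : p.1 = p.2 := τ₁.symm.injective h1
        rw [this] at h; exact lt_irrefl _ h
      · exact Or.inr ⟨h, h1⟩
    · rintro (⟨_, h⟩ | ⟨h, _⟩) <;> exact h
  have hdisj : ∀ τ₁ τ₂ : Equiv.Perm (Fin m),
      Disjoint (Finset.univ.filter (fun p : Fin m × Fin m =>
        τ₁.symm p.1 < τ₁.symm p.2 ∧ τ₂.symm p.1 < τ₂.symm p.2))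
      (Finset.univ.filter (fun p : Fin m × Fin m =>
        τ₂.symm p.1 < τ₂.symm p.2 ∧ τ₁.symm p.2 < τ₁.symm p.1)) := by
    intro τ₁ τ₂
    rw [Finset.disjoint_left]
    intro p hp hq
    simp only [mem_filter, mem_univ, true_and] at hp hq
    exact absurd hp.1 (not_lt.mpr hq.2.le)
  rw [key σ₁ σ₂, Finset.sum_union (hdisj σ₁ σ₂)]
  rw [key σ₂ σ₁, Finset.sum_union (hdisj σ₂ σ₁)]
  have hA : (Finset.univ.filter (fun p : Fin m × Fin m =>
        σ₂.symm p.1 < σ₂.symm p.2 ∧ σ₁.symm p.1 < σ₁.symm p.2)) =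
      (Finset.univ.filter (fun p : Fin m × Fin m =>
        σ₁.symm p.1 < σ₁.symm p.2 ∧ σ₂.symm p.1 < σ₂.symm p.2)) := by
    ext p; simp [and_comm]
  rw [hA]
  ring_nf
  have hswap : ∑ p ∈ Finset.univ.filter (fun p : Fin m × Fin m =>
        σ₂.symm p.1 < σ₂.symm p.2 ∧ σ₁.symm p.2 < σ₁.symm p.1), f p =
      ∑ p ∈ Finset.univ.filter (fun p : Fin m × Fin m =>
        σ₁.symm p.1 < σ₁.symm p.2 ∧ σ₂.symm p.2 < σ₂.symm p.1),
        f (p.2, p.1) := by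
    apply Finset.sum_equiv (Equiv.prodComm (Fin m) (Fin m)) <;> intro p <;>
      simp [and_comm]
  rw [hswap, ← Finset.sum_sub_distrib]
  apply Finset.sum_congr rfl
  intro p _
  simp only [hf]
  cases h1 : y p.1 <;> cases h2 : y p.2 <;> simp [h1, h2]

/-- `E_P[ℓ_R(σ₂,·) − ℓ_R(σ₁,·)] = Σ_{(i,j) ∈ I} [P(Y_i=1) − P(Y_j=1)]`,
where `I` is the set of pairwise disagreements between `σ₁` and `σ₂`. -/
theorem stmt4 (m : ℕ) (σ₁ σ₂ : Equiv.Perm (Fin m))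
    (P : (Fin m → Bool) → ℝ) (hP0 : ∀ y, 0 ≤ P y)
    (hP1 : ∑ y : Fin m → Bool, P y = 1) :
    (∑ y : Fin m → Bool, P y * ((rankLoss σ₂ y : ℝ) - (rankLoss σ₁ y : ℝ))) =
      ∑ p ∈ Finset.univ.filter
          (fun p : Fin m × Fin m =>
            σ₁.symm p.1 < σ₁.symm p.2 ∧ σ₂.symm p.2 < σ₂.symm p.1),
        (marg P p.1 - marg P p.2) := by
  have h1 : ∀ y : Fin m → Bool, P y * ((rankLoss σ₂ y : ℝ) - (rankLoss σ₁ y : ℝ)) =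
      ∑ p ∈ Finset.univ.filter (fun p : Fin m × Fin m =>
        σ₁.symm p.1 < σ₁.symm p.2 ∧ σ₂.symm p.2 < σ₂.symm p.1),
        ((if y p.1 = true then P y else 0) - (if y p.2 = true then P y else 0)) := by
    intro y
    rw [pointwise σ₁ σ₂ y, Finset.mul_sum]
    apply Finset.sum_congr rfl
    intro p _
    by_cases h1 : y p.1 = true <;> by_cases h2 : y p.2 = true <;> simp [h1, h2] <;> ring
  simp_rw [h1]
  rw [Finset.sum_comm]
  apply Finset.sum_congr rfl
  intro p _
  rw [Finset.sum_sub_distrib]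
  rfl
end

section
/- Let L, U : {1,…,m} → [0,1] with L ≤ U pointwise, and suppose σ is a permutation of {1,…,m} such that σ⁻¹(i) < σ⁻¹(j) whenever L(i) > U(j). Then there exist values p(i) ∈ [L(i), U(i)] such that p(σ(1)) ≥ p(σ(2)) ≥ … ≥ p(σ(m)). -/
open Finset

/-- conversely, any permutation `σ` respecting every dominance
relation `L(i) > U(j)` (i.e. ranking `i` above `j`) sorts some admissible
selection `p(i) ∈ [L(i), U(i)]` in decreasing order. -/
theorem stmt11 (m : ℕ) (L U : Fin m → ℝ)
    (h0 : ∀ i, 0 ≤ L i) (h1 : ∀ i, U i ≤ 1) (hLU : ∀ i, L i ≤ U i)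
    (σ : Equiv.Perm (Fin m))
    (hdom : ∀ i j : Fin m, U j < L i → σ.symm i < σ.symm j) :
    ∃ p : Fin m → ℝ, (∀ i, L i ≤ p i ∧ p i ≤ U i) ∧
      ∀ k l : Fin m, k ≤ l → p (σ l) ≤ p (σ k) := by
  refine ⟨fun i => (Finset.univ.filter (fun l => σ.symm i ≤ l)).sup'
      ⟨σ.symm i, by simp⟩ (fun l => L (σ l)), fun i => ⟨?_, ?_⟩, ?_⟩
  · have : L i = L (σ (σ.symm i)) := by simp
    rw [this]
    exact Finset.le_sup' (fun l => L (σ l)) (Finset.mem_filter.mpr ⟨Finset.mem_univ _, le_refl _⟩)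
  · apply Finset.sup'_le
    intro l hl
    simp only [Finset.mem_filter] at hl
    by_contra h
    push_neg at h
    have := hdom (σ l) i h
    simp at this
    exact absurd hl.2 (not_le.mpr this)
  · intro k l hkl
    apply Finset.sup'_le
    intro a ha
    simp only [Finset.mem_filter, Equiv.symm_apply_apply] at ha
    exact Finset.le_sup' (fun l => L (σ l)) (Finset.mem_filter.mpr ⟨Finset.mem_univ _, by simp only [Equiv.symm_apply_apply]; exact le_trans hkl ha.2⟩)
end

section
/- Let L, U : {1,…,m} → [0,1] with L ≤ U pointwise, and define s̲(i) = #{j : j = i or L(j) > U(i)} and s̄(i) = m + 1 − #{j : j = i or L(i) > U(j)}. Then any permutation σ for which there exist p(i) ∈ [L(i),U(i)] with p(σ(1)) ≥ … ≥ p(σ(m)) satisfies s̲(i) ≤ σ⁻¹(i) ≤ s̄(i) for every i, with positions numbered from 1. -/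
open Finset

/-- Lower rank `s̲(i) = #{j : j = i ∨ L(j) > U(i)}`. -/
noncomputable def lowerRank {m : ℕ} (L U : Fin m → ℝ) (i : Fin m) : ℕ :=
  (Finset.univ.filter (fun j : Fin m => j = i ∨ U i < L j)).card

/-- Upper rank `s̄(i) = m + 1 − #{j : j = i ∨ L(i) > U(j)}`. -/
noncomputable def upperRank {m : ℕ} (L U : Fin m → ℝ) (i : Fin m) : ℕ :=
  m + 1 - (Finset.univ.filter (fun j : Fin m => i = j ∨ U j < L i)).card

lemma perm_filter_card {m : ℕ} (e : Equiv.Perm (Fin m)) (P : Fin m → Prop)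
    [DecidablePred P] :
    (Finset.univ.filter (fun j => P (e.symm j))).card = (Finset.univ.filter P).card := by
  apply Finset.card_bij (fun j _ => e.symm j)
  · intro a ha; simp at ha ⊢; exact ha
  · intro a _ b _ h; exact e.symm.injective h
  · intro b hb; simp at hb; exact ⟨e b, by simpa using hb, by simp⟩

/-- any permutation sorting admissible marginal probabilities in
decreasing order places each label `i` at a (1-based) position within
`[s̲(i), s̄(i)]`. -/
theorem stmt12 (m : ℕ) (L U : Fin m → ℝ)
    (h0 : ∀ i, 0 ≤ L i) (h1 : ∀ i, U i ≤ 1) (hLU : ∀ i, L i ≤ U i)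
    (σ : Equiv.Perm (Fin m))
    (hE : ∃ p : Fin m → ℝ, (∀ i, L i ≤ p i ∧ p i ≤ U i) ∧
      ∀ k l : Fin m, k ≤ l → p (σ l) ≤ p (σ k)) :
    ∀ i : Fin m, lowerRank L U i ≤ (σ.symm i : ℕ) + 1 ∧
      (σ.symm i : ℕ) + 1 ≤ upperRank L U i := by
  obtain ⟨p, hp, hsort⟩ := hE
  intro i
  -- key monotonicity: if p j > p i then σ.symm j < σ.symm i
  have key : ∀ j : Fin m, p i < p j → σ.symm j < σ.symm i := by
    intro j hij
    by_contra h
    push_neg at h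
    have := hsort _ _ h
    simp at this
    exact absurd (lt_of_lt_of_le hij this) (lt_irrefl _)
  have key' : ∀ j : Fin m, p j < p i → σ.symm i < σ.symm j := by
    intro j hij
    by_contra h
    push_neg at h
    have := hsort _ _ h
    simp at this
    exact absurd (lt_of_lt_of_le hij this) (lt_irrefl _)
  constructor
  · -- lower bound
    have hsub : (Finset.univ.filter (fun j : Fin m => j = i ∨ U i < L j)) ⊆
        (Finset.univ.filter (fun j : Fin m => σ.symm j ≤ σ.symm i)) := by
      intro j hj
      simp only [mem_filter, mem_univ, true_and] at hj ⊢
      rcases hj with rfl | hj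
      · exact le_refl _
      · have : p i < p j := lt_of_le_of_lt (hp i).2 (lt_of_lt_of_le hj (hp j).1)
        exact le_of_lt (key j this)
    have hcard := Finset.card_le_card hsub
    have : (Finset.univ.filter (fun j : Fin m => σ.symm j ≤ σ.symm i)).card
        = (σ.symm i : ℕ) + 1 := by
      rw [perm_filter_card σ (fun k => k ≤ σ.symm i)]
      rw [show Finset.univ.filter (fun k : Fin m => k ≤ σ.symm i) = Iic (σ.symm i) by
        ext k; simp]
      simp
    rw [this] at hcard
    exact hcard
  · -- upper bound
    have hsub : (Finset.univ.filter (fun j : Fin m => i = j ∨ U j < L i)) ⊆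
        (Finset.univ.filter (fun j : Fin m => σ.symm i ≤ σ.symm j)) := by
      intro j hj
      simp only [mem_filter, mem_univ, true_and] at hj ⊢
      rcases hj with rfl | hj
      · exact le_refl _
      · have : p j < p i := lt_of_le_of_lt (hp j).2 (lt_of_lt_of_le hj (hp i).1)
        exact le_of_lt (key' j this)
    have hcard := Finset.card_le_card hsub
    have hci : (Finset.univ.filter (fun j : Fin m => σ.symm i ≤ σ.symm j)).card
        = m - (σ.symm i : ℕ) := by
      rw [perm_filter_card σ (fun k => σ.symm i ≤ k)]
      rw [show Finset.univ.filter (fun k : Fin m => σ.symm i ≤ k) = Ici (σ.symm i) by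
        ext k; simp]
      simp
    rw [hci] at hcard
    unfold upperRank
    have hle : (Finset.univ.filter (fun j : Fin m => i = j ∨ U j < L i)).card ≤ m + 1 :=
      le_trans (Finset.card_le_card (Finset.filter_subset _ _)) (by simp)
    rw [Nat.le_sub_iff_add_le hle]
    have hi : (σ.symm i : ℕ) < m := (σ.symm i).isLt
    omega
end

section
/- Let L, U : {1,…,m} → [0,1] with L ≤ U pointwise. For a permutation σ, say σ is maximal if there is no permutation π with: for all choices p(i) ∈ [L(i),U(i)], Σ_i p(i)(σ⁻¹(i) − π⁻¹(i)) > 0. Then every maximal σ satisfies: σ⁻¹(i) < σ⁻¹(j) whenever L(i) > U(j). -/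
open Finset

/-- if `σ` is maximal — no permutation `π` satisfies
`Σ_i p(i)(σ⁻¹(i) − π⁻¹(i)) > 0` for every admissible `p` in the box — then `σ`
respects every dominance relation `L(i) > U(j)`. -/
theorem stmt13 (m : ℕ) (L U : Fin m → ℝ)
    (h0 : ∀ i, 0 ≤ L i) (h1 : ∀ i, U i ≤ 1) (hLU : ∀ i, L i ≤ U i)
    (σ : Equiv.Perm (Fin m))
    (hmax : ¬ ∃ π : Equiv.Perm (Fin m), ∀ p : Fin m → ℝ,
      (∀ i, L i ≤ p i ∧ p i ≤ U i) →
        0 < ∑ i : Fin m, p i * ((σ.symm i : ℝ) - (π.symm i : ℝ))) :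
    ∀ i j : Fin m, U j < L i → σ.symm i < σ.symm j := by
  intro i j hUL
  by_contra hnot
  push_neg at hnot
  have hij : i ≠ j := by
    intro h; subst h
    exact absurd (hLU i) (not_le.mpr hUL)
  have hlt : σ.symm j < σ.symm i := by
    rcases lt_or_eq_of_le hnot with h | h
    · exact h
    · exact absurd (σ.symm.injective h) (Ne.symm hij)
  apply hmax
  refine ⟨σ.trans (Equiv.swap i j), fun p hp => ?_⟩
  have hsymm : ∀ k, ((σ.trans (Equiv.swap i j)).symm) k = σ.symm (Equiv.swap i j k) := by
    intro k; simp [Equiv.symm_trans_apply]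
  have hsum : ∑ k : Fin m, p k * ((σ.symm k : ℝ) - (((σ.trans (Equiv.swap i j)).symm k : Fin m) : ℝ))
      = p i * ((σ.symm i : ℝ) - (σ.symm j : ℝ)) + p j * ((σ.symm j : ℝ) - (σ.symm i : ℝ)) := by
    rw [← Finset.sum_subset (Finset.subset_univ ({i, j} : Finset (Fin m)))]
    · rw [Finset.sum_pair hij]
      rw [hsymm i, hsymm j, Equiv.swap_apply_left, Equiv.swap_apply_right]
    · intro k _ hk
      simp only [Finset.mem_insert, Finset.mem_singleton, not_or] at hk
      rw [hsymm k, Equiv.swap_apply_of_ne_of_ne hk.1 hk.2]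
      ring
  rw [hsum]
  have h1 : p j ≤ U j := (hp j).2
  have h2 : L i ≤ p i := (hp i).1
  have h3 : ((σ.symm j : ℕ) : ℝ) < ((σ.symm i : ℕ) : ℝ) := by
    exact_mod_cast (Fin.lt_iff_val_lt_val.mp hlt)
  nlinarith [hlt, h3]
end

section
/- Let L, U : {1,…,m} → [0,1] with L ≤ U pointwise. A permutation σ is E-admissible (∃ p(i) ∈ [L(i),U(i)] with p(σ(1)) ≥ … ≥ p(σ(m))) if and only if σ is maximal (no permutation π satisfies Σ_i p(i)(σ⁻¹(i) − π⁻¹(i)) > 0 for every choice p(i) ∈ [L(i),U(i)]). -/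
open Finset

/-- under the box credal set `Π_i [L(i), U(i)]`, a ranking `σ` is
E-admissible (it sorts some admissible marginals in decreasing order) iff it is
maximal (no ranking `π` has strictly positive expected rank-loss advantage over
`σ` for every admissible choice of marginals). -/
theorem stmt14 (m : ℕ) (L U : Fin m → ℝ)
    (h0 : ∀ i, 0 ≤ L i) (h1 : ∀ i, U i ≤ 1) (hLU : ∀ i, L i ≤ U i)
    (σ : Equiv.Perm (Fin m)) :
    (∃ p : Fin m → ℝ, (∀ i, L i ≤ p i ∧ p i ≤ U i) ∧
      ∀ k l : Fin m, k ≤ l → p (σ l) ≤ p (σ k)) ↔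
    (¬ ∃ π : Equiv.Perm (Fin m), ∀ p : Fin m → ℝ,
      (∀ i, L i ≤ p i ∧ p i ≤ U i) →
        0 < ∑ i : Fin m, p i * ((σ.symm i : ℝ) - (π.symm i : ℝ))) := by
  constructor
  · rintro ⟨p, hp, hmono⟩ ⟨π, hπ⟩
    have hpos := hπ p hp
    -- rearrangement inequality: σ minimizes ∑ p i * rank
    have hrearr : ∑ i : Fin m, p i * ((σ.symm i : ℕ) : ℝ)
        ≤ ∑ i : Fin m, p i * ((π.symm i : ℕ) : ℝ) := by
      have e1 : ∑ i : Fin m, p i * ((σ.symm i : ℕ) : ℝ)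
          = ∑ j : Fin m, p (σ j) * ((j : ℕ) : ℝ) := by
        rw [← Equiv.sum_comp σ (fun i => p i * ((σ.symm i : ℕ) : ℝ))]
        simp
      have e2 : ∑ i : Fin m, p i * ((π.symm i : ℕ) : ℝ)
          = ∑ j : Fin m, p (σ j) * ((π.symm (σ j) : ℕ) : ℝ) := by
        rw [← Equiv.sum_comp σ (fun i => p i * ((π.symm i : ℕ) : ℝ))]
      rw [e1, e2]
      have hanti : Antivary (fun j : Fin m => p (σ j))
          (fun j : Fin m => ((j : ℕ) : ℝ)) := by
        intro i j hij
        have h : ((i : ℕ) : ℝ) < ((j : ℕ) : ℝ) := hij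
        have h' : (i : ℕ) < (j : ℕ) := by exact_mod_cast h
        exact hmono _ _ (le_of_lt (Fin.lt_def.2 h'))
      exact hanti.sum_mul_le_sum_mul_comp_perm (σ := σ.trans π.symm)
    have : ∑ i : Fin m, p i * ((σ.symm i : ℝ) - (π.symm i : ℝ)) ≤ 0 := by
      have : ∑ i : Fin m, p i * ((σ.symm i : ℝ) - (π.symm i : ℝ))
          = ∑ i : Fin m, p i * ((σ.symm i : ℕ) : ℝ)
            - ∑ i : Fin m, p i * ((π.symm i : ℕ) : ℝ) := by
        rw [← Finset.sum_sub_distrib]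
        congr 1; ext i; ring
      rw [this]
      linarith
    linarith
  · intro hmax
    by_contra hne
    -- first show: there are j ≤ k with U (σ j) < L (σ k)
    by_cases hcond : ∀ j k : Fin m, j ≤ k → L (σ k) ≤ U (σ j)
    · -- construct admissible decreasing p
      apply hne
      refine ⟨fun i => (Finset.Iic (σ.symm i)).inf' ⟨σ.symm i, Finset.mem_Iic.2 le_rfl⟩
        (fun j => U (σ j)), ?_, ?_⟩
      · intro i
        constructor
        · apply Finset.le_inf'
          intro j hj
          have := hcond j (σ.symm i) (Finset.mem_Iic.1 hj)
          simpa using this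
        · have := Finset.inf'_le (f := fun j => U (σ j))
            (b := σ.symm i) (Finset.mem_Iic.2 le_rfl)
          simpa using this
      · intro k l hkl
        simp only [Equiv.symm_apply_apply]
        apply Finset.le_inf'
        intro j hj
        exact Finset.inf'_le _ (Finset.mem_Iic.2 ((Finset.mem_Iic.1 hj).trans hkl))
    · push_neg at hcond
      obtain ⟨j, k, hjk, hUL⟩ := hcond
      have hne' : j ≠ k := by
        rintro rfl
        exact absurd (hLU (σ j)) (not_le.2 hUL)
      apply hmax
      refine ⟨(Equiv.swap j k).trans σ, ?_⟩
      intro p hp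
      have hsymm : ∀ i, ((Equiv.swap j k).trans σ).symm i = Equiv.swap j k (σ.symm i) := by
        intro i; rfl
      have hre : ∑ i : Fin m, p i * ((σ.symm i : ℝ) - ((((Equiv.swap j k).trans σ).symm i : ℕ) : ℝ))
          = ∑ t : Fin m, p (σ t) * (((t : ℕ) : ℝ) - ((Equiv.swap j k t : ℕ) : ℝ)) := by
        rw [← Equiv.sum_comp σ]
        simp [hsymm]
      rw [hre]
      have hsub : ({j, k} : Finset (Fin m)) ⊆ Finset.univ := Finset.subset_univ _
      rw [← Finset.sum_subset hsub (by
        intro t _ ht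
        simp only [Finset.mem_insert, Finset.mem_singleton, not_or] at ht
        rw [Equiv.swap_apply_of_ne_of_ne ht.1 ht.2]
        ring)]
      rw [Finset.sum_pair hne']
      rw [Equiv.swap_apply_left, Equiv.swap_apply_right]
      have hjk' : j < k := lt_of_le_of_ne hjk hne'
      have hjkR : ((j : ℕ) : ℝ) < ((k : ℕ) : ℝ) := by exact_mod_cast hjk'
      have h1' : p (σ j) ≤ U (σ j) := (hp (σ j)).2
      have h2' : L (σ k) ≤ p (σ k) := (hp (σ k)).1
      have hpp : p (σ j) < p (σ k) := lt_of_le_of_lt h1' (lt_of_lt_of_le hUL h2')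
      nlinarith
end

section
/- Let P be a probability distribution on {0,1}^m and σ a permutation sorting labels in decreasing order of marginal probabilities, i.e., P(Y_{σ(1)}=1) ≥ … ≥ P(Y_{σ(m)}=1). Then for every permutation π, E_P[ℓ_R(π,·)] ≥ E_P[ℓ_R(σ,·)], i.e., σ minimizes expected rank loss. -/
open Finset

section aux

variable {m : ℕ}

private lemma double_sum (G : Fin m → Fin m → ℝ) (hG : ∀ i j, G i j = G j i) :
    (2:ℝ) * ∑ p ∈ Finset.univ.filter (fun p : Fin m × Fin m => p.1 < p.2), G p.1 p.2
      = ∑ p ∈ Finset.univ.filter (fun p : Fin m × Fin m => p.1 ≠ p.2), G p.1 p.2 := by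
  have h1 : Finset.univ.filter (fun p : Fin m × Fin m => p.1 ≠ p.2)
      = Finset.univ.filter (fun p : Fin m × Fin m => p.1 < p.2)
        ∪ Finset.univ.filter (fun p : Fin m × Fin m => p.2 < p.1) := by
    ext p
    simp only [Finset.mem_filter, Finset.mem_union, Finset.mem_univ, true_and]
    exact ne_iff_lt_or_gt
  have hdisj : Disjoint (Finset.univ.filter (fun p : Fin m × Fin m => p.1 < p.2))
      (Finset.univ.filter (fun p : Fin m × Fin m => p.2 < p.1)) := by
    rw [Finset.disjoint_left]
    intro p hp hp'
    simp only [Finset.mem_filter] at hp hp'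
    exact absurd hp'.2 (not_lt_of_gt hp.2)
  have h2 : ∑ p ∈ Finset.univ.filter (fun p : Fin m × Fin m => p.2 < p.1), G p.1 p.2
      = ∑ p ∈ Finset.univ.filter (fun p : Fin m × Fin m => p.1 < p.2), G p.1 p.2 := by
    refine Finset.sum_nbij' (fun p => Prod.swap p) (fun p => Prod.swap p) ?_ ?_ ?_ ?_ ?_
    · intro p hp; simp only [Finset.mem_filter] at hp ⊢; exact ⟨Finset.mem_univ _, hp.2⟩
    · intro p hp; simp only [Finset.mem_filter] at hp ⊢; exact ⟨Finset.mem_univ _, hp.2⟩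
    · intro p _; simp
    · intro p _; simp
    · intro p _; exact hG p.1 p.2
  rw [h1, Finset.sum_union hdisj, h2, two_mul]

private lemma sym_sum_invariant (F : Fin m → Fin m → ℝ) (hF : ∀ i j, F i j = F j i)
    (π : Equiv.Perm (Fin m)) :
    ∑ p ∈ Finset.univ.filter (fun p : Fin m × Fin m => p.1 < p.2), F (π p.1) (π p.2)
      = ∑ p ∈ Finset.univ.filter (fun p : Fin m × Fin m => p.1 < p.2), F p.1 p.2 := by
  have hG : ∀ i j, F (π i) (π j) = F (π j) (π i) := fun i j => hF _ _
  have key : ∑ p ∈ Finset.univ.filter (fun p : Fin m × Fin m => p.1 ≠ p.2),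
      F (π p.1) (π p.2)
      = ∑ p ∈ Finset.univ.filter (fun p : Fin m × Fin m => p.1 ≠ p.2), F p.1 p.2 := by
    refine Finset.sum_nbij' (fun p => (π p.1, π p.2)) (fun p => (π⁻¹ p.1, π⁻¹ p.2))
      ?_ ?_ ?_ ?_ ?_
    · intro p hp; simp only [Finset.mem_filter] at hp ⊢
      exact ⟨Finset.mem_univ _, fun h => hp.2 (π.injective h)⟩
    · intro p hp; simp only [Finset.mem_filter] at hp ⊢
      exact ⟨Finset.mem_univ _, fun h => hp.2 (π⁻¹.injective h)⟩
    · intro p _; simp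
    · intro p _; simp
    · intro p _; rfl
  have e1 := double_sum (fun i j => F (π i) (π j)) hG
  have e2 := double_sum F hF
  have : (2:ℝ) * ∑ p ∈ Finset.univ.filter (fun p : Fin m × Fin m => p.1 < p.2),
      F (π p.1) (π p.2)
      = (2:ℝ) * ∑ p ∈ Finset.univ.filter (fun p : Fin m × Fin m => p.1 < p.2), F p.1 p.2 := by
    rw [e1, e2, key]
  exact mul_left_cancel₀ (by norm_num) this

private lemma sum_snd (f : Fin m → ℝ) :
    ∑ p ∈ Finset.univ.filter (fun p : Fin m × Fin m => p.1 < p.2), f p.2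
      = ∑ l : Fin m, (l.val : ℝ) * f l := by
  rw [Finset.sum_filter, Fintype.sum_prod_type, Finset.sum_comm]
  refine Finset.sum_congr rfl fun l _ => ?_
  have : ∑ k : Fin m, (if k < l then f l else 0)
      = ∑ k ∈ Finset.univ.filter (fun k : Fin m => k < l), f l := by
    rw [Finset.sum_filter]
  rw [this, Finset.sum_const]
  have hc : (Finset.univ.filter (fun k : Fin m => k < l)).card = l.val := by
    have : Finset.univ.filter (fun k : Fin m => k < l) = Finset.Iio l := by
      ext k; simp
    rw [this, Fin.card_Iio]
  rw [hc, nsmul_eq_mul]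

end aux

/-- a permutation sorting the labels in decreasing order of the
marginal probabilities `P(Y_i = 1)` minimizes the expected rank loss. -/
theorem stmt19 (m : ℕ) (P : (Fin m → Bool) → ℝ) (hP0 : ∀ y, 0 ≤ P y)
    (hP1 : ∑ y : Fin m → Bool, P y = 1)
    (σ : Equiv.Perm (Fin m))
    (hsorted : ∀ k l : Fin m, k ≤ l → marg P (σ l) ≤ marg P (σ k)) :
    ∀ π : Equiv.Perm (Fin m),
      (∑ y : Fin m → Bool, P y * (rankLoss σ y : ℝ)) ≤
        ∑ y : Fin m → Bool, P y * (rankLoss π y : ℝ) := by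
  intro π
  -- joint probability P(Y_i = 1 ∧ Y_j = 1)
  set J : Fin m → Fin m → ℝ :=
    fun i j => ∑ y : Fin m → Bool, if y i = true ∧ y j = true then P y else 0 with hJ
  have hJsymm : ∀ i j, J i j = J j i := by
    intro i j
    exact Finset.sum_congr rfl fun y _ => if_congr and_comm rfl rfl
  -- expected loss expansion
  have hexp : ∀ ρ : Equiv.Perm (Fin m),
      ∑ y : Fin m → Bool, P y * (rankLoss ρ y : ℝ)
        = (∑ l : Fin m, (l.val : ℝ) * marg P (ρ l))
          - ∑ p ∈ Finset.univ.filter (fun p : Fin m × Fin m => p.1 < p.2),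
              J (ρ p.1) (ρ p.2) := by
    intro ρ
    have h1 : ∀ y : Fin m → Bool, P y * (rankLoss ρ y : ℝ)
        = ∑ p ∈ Finset.univ.filter (fun p : Fin m × Fin m => p.1 < p.2),
            (if y (ρ p.1) = false ∧ y (ρ p.2) = true then P y else 0) := by
      intro y
      rw [rankLoss, Nat.cast_sum, Finset.mul_sum]
      refine Finset.sum_congr rfl fun p _ => ?_
      split_ifs <;> simp
    calc ∑ y : Fin m → Bool, P y * (rankLoss ρ y : ℝ)
        = ∑ y : Fin m → Bool,
            ∑ p ∈ Finset.univ.filter (fun p : Fin m × Fin m => p.1 < p.2),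
              (if y (ρ p.1) = false ∧ y (ρ p.2) = true then P y else 0) :=
          Finset.sum_congr rfl fun y _ => h1 y
      _ = ∑ p ∈ Finset.univ.filter (fun p : Fin m × Fin m => p.1 < p.2),
            ∑ y : Fin m → Bool,
              (if y (ρ p.1) = false ∧ y (ρ p.2) = true then P y else 0) :=
          Finset.sum_comm
      _ = ∑ p ∈ Finset.univ.filter (fun p : Fin m × Fin m => p.1 < p.2),
            (marg P (ρ p.2) - J (ρ p.1) (ρ p.2)) := by
          refine Finset.sum_congr rfl fun p _ => ?_
          rw [eq_sub_iff_add_eq, hJ, ← Finset.sum_add_distrib, marg]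
          refine Finset.sum_congr rfl fun y _ => ?_
          cases h1 : y (ρ p.1) <;> cases h2 : y (ρ p.2) <;> simp [h1, h2]
      _ = (∑ l : Fin m, (l.val : ℝ) * marg P (ρ l))
          - ∑ p ∈ Finset.univ.filter (fun p : Fin m × Fin m => p.1 < p.2),
              J (ρ p.1) (ρ p.2) := by
          rw [Finset.sum_sub_distrib, sum_snd (fun l => marg P (ρ l))]
  rw [hexp σ, hexp π, sym_sum_invariant J hJsymm σ, sym_sum_invariant J hJsymm π]
  have hrearr : ∑ l : Fin m, (l.val : ℝ) * marg P (σ l)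
      ≤ ∑ l : Fin m, (l.val : ℝ) * marg P (π l) := by
    set f : Fin m → ℝ := fun l => (l.val : ℝ) with hf
    set g : Fin m → ℝ := fun l => marg P (σ l) with hg
    have hanti : Antivary f g := by
      intro i j hij
      rcases le_or_gt j i with h | h
      · exact_mod_cast Nat.cast_le.2 (Fin.le_iff_val_le_val.1 h)
      · exact absurd (hsorted i j h.le) (not_le_of_gt hij)
    have key := hanti.sum_smul_le_sum_smul_comp_perm (σ := σ⁻¹ * π)
    simp only [smul_eq_mul] at key
    have : ∀ l : Fin m, g ((σ⁻¹ * π) l) = marg P (π l) := by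
      intro l
      simp [hg, Equiv.Perm.mul_apply]
    calc ∑ l : Fin m, (l.val : ℝ) * marg P (σ l) = ∑ l : Fin m, f l * g l := rfl
      _ ≤ ∑ l : Fin m, f l * g ((σ⁻¹ * π) l) := key
      _ = ∑ l : Fin m, (l.val : ℝ) * marg P (π l) :=
          Finset.sum_congr rfl fun l _ => by rw [this l]
  linarith
end
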